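/- The continuous-time system ẋ₁ = c x₁ + u₁, ẋ₂ = d x₂ + (d−2c)x₁² + x₁² u₁ + u₂ lifts exactly under z = θ(x) = (x₁, x₂+x₁², x₁², 1) to the bilinear system ż = A z + B₁ z u₁ + B₂ z u₂ with A = diag(c, d, 2c, 0), B₁ having nonzero entries (1,4)=1, (2,1)=2, (2,3)=1, (3,1)=2, and B₂ having only nonzero entry (2,4)=1: any differentiable solution x(t) yields z(t) = θ(x(t)) solving the bilinear ODE. -/

import Mathlib

open Matrix

/-- Koopman lifting of Example 2. -/
def θex2 : ℝ × ℝ → Fin 4 → ℝ :=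
  fun x => ![x.1, x.2 + x.1 ^ 2, x.1 ^ 2, 1]

def Aex2c (c d : ℝ) : Matrix (Fin 4) (Fin 4) ℝ :=
  Matrix.diagonal ![c, d, 2 * c, 0]

/-- Nonzero entries (1-based): (1,4)=1, (2,1)=2, (2,3)=1, (3,1)=2. -/
def B₁ex2c : Matrix (Fin 4) (Fin 4) ℝ :=
  !![0, 0, 0, 1;
     2, 0, 1, 0;
     2, 0, 0, 0;
     0, 0, 0, 0]

/-- Only nonzero entry (1-based): (2,4)=1. -/
def B₂ex2c : Matrix (Fin 4) (Fin 4) ℝ :=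
  !![0, 0, 0, 0;
     0, 0, 0, 1;
     0, 0, 0, 0;
     0, 0, 0, 0]

def dθex2 (p v : ℝ × ℝ) : Fin 4 → ℝ :=
  ![v.1, v.2 + 2 * p.1 * v.1, 2 * p.1 * v.1, 0]

theorem hasDerivAt_θex2_comp {x : ℝ → ℝ × ℝ} {v : ℝ × ℝ} {t : ℝ}
    (h₁ : HasDerivAt (fun s => (x s).1) v.1 t) (h₂ : HasDerivAt (fun s => (x s).2) v.2 t) :
    HasDerivAt (fun s => θex2 (x s)) (dθex2 (x t) v) t := by
  have hsq : HasDerivAt (fun s => (x s).1 ^ 2) (2 * (x t).1 * v.1) t := by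
    simpa using h₁.fun_pow 2
  rw [hasDerivAt_pi]
  intro i
  fin_cases i
  · exact h₁
  · exact h₂.fun_add hsq
  · exact hsq
  · exact hasDerivAt_const t 1

theorem Aex2c_mulVec_θex2 (c d : ℝ) (p : ℝ × ℝ) :
    (Aex2c c d).mulVec (θex2 p) = ![c * p.1, d * (p.2 + p.1 ^ 2), 2 * c * p.1 ^ 2, 0] := by
  ext i
  fin_cases i <;> simp [Aex2c, θex2, mulVec_diagonal, mul_assoc]

theorem B₁ex2c_mulVec_θex2 (p : ℝ × ℝ) :
    B₁ex2c.mulVec (θex2 p) = ![1, 2 * p.1 + p.1 ^ 2, 2 * p.1, 0] := by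
  ext i
  fin_cases i <;> simp [B₁ex2c, θex2, mul_comm]

theorem B₂ex2c_mulVec_θex2 (p : ℝ × ℝ) :
    B₂ex2c.mulVec (θex2 p) = ![0, 1, 0, 0] := by
  ext i
  fin_cases i <;> simp [B₂ex2c, θex2]

theorem dθex2_eq_bilinear_field (c d a b : ℝ) (p : ℝ × ℝ) :
    dθex2 p (c * p.1 + a, d * p.2 + (d - 2 * c) * p.1 ^ 2 + p.1 ^ 2 * a + b) =
      (Aex2c c d).mulVec (θex2 p) + a • B₁ex2c.mulVec (θex2 p) + b • B₂ex2c.mulVec (θex2 p) := by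
  rw [Aex2c_mulVec_θex2, B₁ex2c_mulVec_θex2, B₂ex2c_mulVec_θex2]
  simp only [dθex2, smul_cons, smul_eq_mul, smul_empty, add_cons, head_cons, tail_cons,
    empty_add_empty]
  ring_nf

/-- Any differentiable solution of `ẋ₁ = c x₁ + u₁`, `ẋ₂ = d x₂ + (d−2c)x₁² + x₁²u₁ + u₂`
lifts under `θ` to a solution of the bilinear system `ż = A z + B₁ z u₁ + B₂ z u₂`. -/
theorem ex2_continuous_bilinear_lift
    (c d : ℝ) (u₁ u₂ : ℝ → ℝ) (x : ℝ → ℝ × ℝ)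
    (hx₁ : ∀ t, HasDerivAt (fun s => (x s).1) (c * (x t).1 + u₁ t) t)
    (hx₂ : ∀ t, HasDerivAt (fun s => (x s).2)
      (d * (x t).2 + (d - 2 * c) * (x t).1 ^ 2 + (x t).1 ^ 2 * u₁ t + u₂ t) t) :
    ∀ t, HasDerivAt (fun s => θex2 (x s))
      ((Aex2c c d).mulVec (θex2 (x t)) + u₁ t • B₁ex2c.mulVec (θex2 (x t))
        + u₂ t • B₂ex2c.mulVec (θex2 (x t))) t := by
  intro t
  rw [← dθex2_eq_bilinear_field]
  exact hasDerivAt_θex2_comp (hx₁ t) (hx₂ t)
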